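/- arXiv:1408.3483 — 7 statements merged into one kernel-verified Lean document; each statement's English description precedes it below -/
import Mathlib

section
/- Let R be a commutative Noetherian domain with field of fractions K, and let I be a nonzero ideal of R. Then the quotient I⁻¹/R of R-modules is isomorphic (as an R-module) to Ext¹_R(R/I, R), where I⁻¹ = {q ∈ K : qI ⊆ R}. -/
/-!
Resolve `R ⧸ I` projectively starting from the quotient map `R → R ⧸ I`. Then `d : P₁ → R` has
image `I` and kernel the image of `P₂ → P₁`, so by left exactness of `Hom(-, R)` the 1-cocycles
`P₁ → R` are exactly the maps `ψ ∘ d` with `ψ : I → R`, and the coboundaries are those where `ψ`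
extends to `R`. Hence `Ext¹(R ⧸ I, R) ≅ Hom(I, R) ⧸ Hom(R, R)`.
Since `R` is a domain and `I ≠ 0`, every `ψ : I → R` is multiplication by the unique element
`q = ψ a / a ∈ K` (for any `a ≠ 0` in `I`), and `q ∈ I⁻¹`; so `Hom(I, R) ≅ I⁻¹`, under which the
maps extending to `R` are the multiplications by elements of `R`.
-/

open CategoryTheory Limits Projective IsLocalization

noncomputable section

universe v u

lemma CategoryTheory.Projective.d_comp_self {C : Type u} [Category.{v} C] [Abelian C]
    [EnoughProjectives C] {X Y : C} (f : X ⟶ Y) : d f ≫ f = 0 :=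
  (Category.assoc _ _ _).trans ((congrArg _ (kernel.condition f)).trans comp_zero)

namespace CategoryTheory.ProjectiveResolution

variable {C : Type u} [Category.{v} C] [Abelian C] [EnoughProjectives C] {P Z : C}

def ofEpiComplex (p : P ⟶ Z) : ChainComplex C ℕ :=
  ChainComplex.mk' P (syzygies p) (d p) fun f => ⟨_, d f, d_comp_self f⟩

lemma ofEpiComplex_d_1_0 (p : P ⟶ Z) : (ofEpiComplex p).d 1 0 = d p := by
  simp [ofEpiComplex]

lemma ofEpiComplex_exactAt_succ (p : P ⟶ Z) (n : ℕ) : (ofEpiComplex p).ExactAt (n + 1) := by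
  rw [HomologicalComplex.exactAt_iff' _ (n + 2) (n + 1) n (by simp) (by simp)]
  let e : (ofEpiComplex p).X (n + 2) ≅ syzygies ((ofEpiComplex p).d (n + 1) n) :=
    ChainComplex.mk'XIso _ _ _ _ n
  have hd : (ofEpiComplex p).d (n + 2) (n + 1) = e.hom ≫ d ((ofEpiComplex p).d (n + 1) n) :=
    ChainComplex.mk'_d _ _ _ _ n
  refine (ShortComplex.exact_iff_of_iso ?_).1 (exact_d_f ((ofEpiComplex p).d (n + 1) n))
  refine ShortComplex.isoMk e.symm (Iso.refl _) (Iso.refl _) ?_ ?_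
  · change e.inv ≫ (ofEpiComplex p).d (n + 2) (n + 1) = _ ≫ 𝟙 _
    rw [hd, Iso.inv_hom_id_assoc, Category.comp_id]
  · exact (Category.id_comp _).trans (Category.comp_id _).symm

instance (p : P ⟶ Z) [Projective P] (n : ℕ) : Projective ((ofEpiComplex p).X n) := by
  obtain (_ | _ | _ | n) := n
  · assumption
  all_goals apply Projective.projective_over

def ofEpi (p : P ⟶ Z) [Projective P] [Epi p] : ProjectiveResolution Z where
  complex := ofEpiComplex p
  π := (ChainComplex.toSingle₀Equiv _ _).symm ⟨p, by rw [ofEpiComplex_d_1_0]; exact d_comp_self p⟩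
  quasiIso := ⟨fun n => by
    cases n
    · rw [ChainComplex.quasiIsoAt₀_iff, ShortComplex.quasiIso_iff_of_zeros' _ rfl rfl rfl]
      refine (ShortComplex.exact_and_epi_g_iff_of_iso ?_).2
        ⟨exact_d_f p, by dsimp; infer_instance⟩
      refine ShortComplex.isoMk (Iso.refl _) (Iso.refl _) (Iso.refl _) ?_ ?_
      · exact (Category.id_comp _).trans
          ((ofEpiComplex_d_1_0 p).symm.trans (Category.comp_id _).symm)
      · exact (Category.id_comp _).trans ((Category.comp_id _).symm.trans (congrArg (· ≫ 𝟙 Z)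
          (ChainComplex.toSingle₀Equiv_symm_apply_f_zero (C := ofEpiComplex p) p _).symm))
    · rw [quasiIsoAt_iff_exactAt' _ _ (ChainComplex.exactAt_succ_single_obj _ _)]
      exact ofEpiComplex_exactAt_succ p _⟩

end CategoryTheory.ProjectiveResolution

namespace Ideal

section Inverse

variable {R : Type*} [CommRing R] {K : Type*} [Field K] [Algebra R K] {I : Ideal R}

lemma algebraMap_mem_one_div_coeSubmodule (r : R) :
    algebraMap R K r ∈ (1 / coeSubmodule K I : Submodule R K) :=
  Submodule.mem_div_iff_forall_mul_mem.2 fun _ ⟨b, _, hb⟩ =>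
    Submodule.mem_one.2 ⟨r * b, by rw [map_mul, ← hb]; rfl⟩

variable [FaithfulSMul R K]

variable (K I) in
def inverseToDual : (1 / coeSubmodule K I : Submodule R K) →ₗ[R] Module.Dual R I :=
  LinearMap.codRestrict₂
    (((LinearMap.mul R K).comp (Submodule.subtype _)).compl₂
      ((Algebra.linearMap R K).comp I.subtype))
    (Algebra.linearMap R K) (FaithfulSMul.algebraMap_injective R K) fun q a =>
      Submodule.one_eq_range (R := R) (A := K) ▸
        Submodule.mem_div_iff_forall_mul_mem.1 q.2 _ ⟨a, a.2, rfl⟩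

@[simp]
lemma algebraMap_inverseToDual_apply (q : (1 / coeSubmodule K I : Submodule R K)) (a : I) :
    algebraMap R K (I.inverseToDual K q a) = q * algebraMap R K a :=
  LinearMap.codRestrict₂_apply (i := Algebra.linearMap R K) ..

lemma inverseToDual_algebraMap (r : R) :
    I.inverseToDual K ⟨algebraMap R K r, algebraMap_mem_one_div_coeSubmodule r⟩ =
      LinearMap.lcomp R R I.subtype (LinearMap.mulLeft R r) :=
  LinearMap.ext fun a => FaithfulSMul.algebraMap_injective R K <| by
    rw [algebraMap_inverseToDual_apply, LinearMap.lcomp_apply', LinearMap.comp_apply,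
      LinearMap.mulLeft_apply, map_mul, Submodule.subtype_apply]

lemma inverseToDual_injective (hI : I ≠ ⊥) : Function.Injective (I.inverseToDual K) := by
  intro q q' h
  obtain ⟨a, haI, ha⟩ := Submodule.exists_mem_ne_zero_of_ne_bot hI
  have h' := congrArg (algebraMap R K) (LinearMap.congr_fun h ⟨a, haI⟩)
  simp only [algebraMap_inverseToDual_apply] at h'
  exact Subtype.ext <| mul_right_cancel₀
    ((map_ne_zero_iff _ (FaithfulSMul.algebraMap_injective R K)).2 ha) h'

lemma inverseToDual_surjective (hI : I ≠ ⊥) : Function.Surjective (I.inverseToDual K) := by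
  intro φ
  obtain ⟨a, haI, ha⟩ := Submodule.exists_mem_ne_zero_of_ne_bot hI
  have ha' : algebraMap R K a ≠ 0 :=
    (map_ne_zero_iff _ (FaithfulSMul.algebraMap_injective R K)).2 ha
  set q := algebraMap R K (φ ⟨a, haI⟩) / algebraMap R K a
  have hq : ∀ b : I, q * algebraMap R K b = algebraMap R K (φ b) := by
    intro b
    have h : a * φ b = b * φ ⟨a, haI⟩ := by
      rw [← smul_eq_mul, ← smul_eq_mul, ← map_smul, ← map_smul]
      congr 1
      exact Subtype.ext (mul_comm _ _)
    rw [div_mul_eq_mul_div, div_eq_iff ha', ← map_mul, ← map_mul, mul_comm (φ b), h, mul_comm]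
  have hq_mem : q ∈ (1 / coeSubmodule K I : Submodule R K) := by
    rw [Submodule.mem_div_iff_forall_mul_mem]
    rintro _ ⟨b, hb, rfl⟩
    exact Submodule.mem_one.2 ⟨_, (hq ⟨b, hb⟩).symm⟩
  refine ⟨⟨q, hq_mem⟩, LinearMap.ext fun b => FaithfulSMul.algebraMap_injective R K ?_⟩
  rw [algebraMap_inverseToDual_apply, hq]

variable (K) in
def inverseEquivDual (hI : I ≠ ⊥) :
    (1 / coeSubmodule K I : Submodule R K) ≃ₗ[R] Module.Dual R I :=
  LinearEquiv.ofBijective _ ⟨inverseToDual_injective hI, inverseToDual_surjective hI⟩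

lemma map_inverseEquivDual_one (hI : I ≠ ⊥) :
    ((1 : Submodule R K).comap (1 / coeSubmodule K I).subtype).map
        (inverseEquivDual K hI).toLinearMap =
      LinearMap.range (LinearMap.lcomp R R I.subtype) := by
  ext φ
  constructor
  · rintro ⟨q, hq, rfl⟩
    obtain ⟨r, hr⟩ := Submodule.mem_one.1 hq
    obtain rfl : q = ⟨algebraMap R K r, algebraMap_mem_one_div_coeSubmodule r⟩ :=
      Subtype.ext hr.symm
    exact ⟨_, (inverseToDual_algebraMap r).symm⟩
  · rintro ⟨ψ, rfl⟩
    refine ⟨⟨algebraMap R K (ψ 1), algebraMap_mem_one_div_coeSubmodule _⟩,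
      Submodule.algebraMap_mem _, ?_⟩
    refine (inverseToDual_algebraMap (ψ 1)).trans (congrArg _ (LinearMap.ext_ring ?_))
    simp

variable (K) in
def inverseQuotEquiv (hI : I ≠ ⊥) :
    ((1 / coeSubmodule K I : Submodule R K) ⧸
        (1 : Submodule R K).comap (1 / coeSubmodule K I).subtype) ≃ₗ[R]
      Module.Dual R I ⧸ LinearMap.range (LinearMap.lcomp R R I.subtype) :=
  Submodule.Quotient.equiv _ _ (inverseEquivDual K hI) (map_inverseEquivDual_one hI)

end Inverse

section ExtOne

variable {R : Type u} [CommRing R] (I : Ideal R)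

instance : Epi (ModuleCat.ofHom I.mkQ) := (ModuleCat.epi_iff_surjective _).2 I.mkQ_surjective

abbrev quotientResolution : ProjectiveResolution (ModuleCat.of R (R ⧸ I)) :=
  ProjectiveResolution.ofEpi (ModuleCat.ofHom I.mkQ)

lemma quotientResolution_d_one_zero :
    (quotientResolution I).complex.d 1 0 = Projective.d (ModuleCat.ofHom I.mkQ) :=
  ProjectiveResolution.ofEpiComplex_d_1_0 _

lemma quotientResolution_d_one_zero_mem (x : (quotientResolution I).complex.X 1) :
    ((quotientResolution I).complex.d 1 0).hom x ∈ I := by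
  rw [quotientResolution_d_one_zero]
  exact (Submodule.Quotient.mk_eq_zero I).1
    (LinearMap.congr_fun (congrArg ModuleCat.Hom.hom
      (Projective.d_comp_self (ModuleCat.ofHom I.mkQ))) x)

lemma exists_quotientResolution_d_one_zero_eq {a : R} (ha : a ∈ I) :
    ∃ x, ((quotientResolution I).complex.d 1 0).hom x = a := by
  rw [quotientResolution_d_one_zero]
  exact (ShortComplex.moduleCat_exact_iff _).1 (exact_d_f (ModuleCat.ofHom I.mkQ)) a
    ((Submodule.Quotient.mk_eq_zero I).2 ha)

def quotientResolutionToIdeal : (quotientResolution I).complex.X 1 →ₗ[R] I :=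
  LinearMap.codRestrict I ((quotientResolution I).complex.d 1 0).hom
    (quotientResolution_d_one_zero_mem I)

lemma quotientResolutionToIdeal_surjective : Function.Surjective I.quotientResolutionToIdeal :=
  fun a => (exists_quotientResolution_d_one_zero_eq I a.2).imp fun _ hx => Subtype.ext hx

lemma exact_quotientResolution_d_toIdeal :
    Function.Exact ((quotientResolution I).complex.d 2 1).hom I.quotientResolutionToIdeal :=
  LinearMap.exact_iff.2 ((LinearMap.ker_codRestrict _ _ _).trans
    ((quotientResolution I).exact_succ 0).moduleCat_range_eq_ker.symm)

variable (N : ModuleCat.{u} R)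

abbrev extOneShortComplex : ShortComplex (ModuleCat.{u} R) :=
  ((quotientResolution I).complex.linearYonedaObj R N).sc' 0 1 2

def homToCycles : (I →ₗ[R] N) →ₗ[R] LinearMap.ker (extOneShortComplex I N).g.hom :=
  LinearMap.codRestrict _
    ((ModuleCat.homLinearEquiv (S := R)).symm.toLinearMap ∘ₗ
      LinearMap.lcomp R N I.quotientResolutionToIdeal)
    fun ψ => ModuleCat.hom_ext <| by
      change ψ ∘ₗ I.quotientResolutionToIdeal ∘ₗ ((quotientResolution I).complex.d 2 1).hom = 0
      rw [(exact_quotientResolution_d_toIdeal I).linearMap_comp_eq_zero, LinearMap.comp_zero]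

lemma homToCycles_bijective : Function.Bijective (homToCycles I N) := by
  refine ⟨fun ψ ψ' h => ?_, fun c => ?_⟩
  · exact (quotientResolutionToIdeal_surjective I).injective_linearMapComp_right
      (congrArg (fun c => c.1.hom) h)
  · obtain ⟨ψ, hψ⟩ := (LinearMap.exact_lcomp_of_exact_of_surjective N
      (exact_quotientResolution_d_toIdeal I) (quotientResolutionToIdeal_surjective I)
      c.1.hom).1 (congrArg ModuleCat.Hom.hom c.2)
    exact ⟨ψ, Subtype.ext (ModuleCat.hom_ext hψ)⟩

def homEquivCycles : (I →ₗ[R] N) ≃ₗ[R] LinearMap.ker (extOneShortComplex I N).g.hom :=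
  LinearEquiv.ofBijective _ (homToCycles_bijective I N)

lemma map_homEquivCycles_range_lcomp :
    (LinearMap.range (LinearMap.lcomp R N I.subtype)).map (homEquivCycles I N).toLinearMap =
      LinearMap.range (extOneShortComplex I N).moduleCatToCycles := by
  have h : (extOneShortComplex I N).moduleCatToCycles = (homEquivCycles I N).toLinearMap ∘ₗ
      LinearMap.lcomp R N I.subtype ∘ₗ (ModuleCat.homLinearEquiv (S := R)).toLinearMap := rfl
  rw [h, LinearMap.range_comp]
  exact congrArg _ (LinearMap.range_comp_of_range_eq_top _ (LinearEquiv.range _)).symm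

def extOneQuotientEquiv :
    ((Ext R (ModuleCat.{u} R) 1).obj (Opposite.op (ModuleCat.of R (R ⧸ I)))).obj N ≃ₗ[R]
      (I →ₗ[R] N) ⧸ LinearMap.range (LinearMap.lcomp R N I.subtype) :=
  ((quotientResolution I).isoExt 1 N ≪≫
    ShortComplex.homologyMapIso
      (((quotientResolution I).complex.linearYonedaObj R N).isoSc' 0 1 2 (by simp) (by simp)) ≪≫
    (extOneShortComplex I N).moduleCatHomologyIso).toLinearEquiv.trans
  (Submodule.Quotient.equiv _ _ (homEquivCycles I N) (map_homEquivCycles_range_lcomp I N)).symm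

end ExtOne

end Ideal

end

theorem stmt0_general (R : Type) [CommRing R] [IsDomain R]
    (K : Type) [Field K] [Algebra R K] [IsFractionRing R K]
    (I : Ideal R) (hI : I ≠ ⊥)
    (Iinv : Submodule R K)
    (hIinv : Iinv = (1 : Submodule R K) / (Submodule.map (Algebra.linearMap R K) I)) :
    Nonempty ((Iinv ⧸ ((1 : Submodule R K).comap Iinv.subtype)) ≃ₗ[R]
      ((Ext R (ModuleCat R) 1).obj (Opposite.op (ModuleCat.of R (R ⧸ I)))).obj
        (ModuleCat.of R R)) := by
  subst hIinv
  exact ⟨(Ideal.inverseQuotEquiv K hI).trans (Ideal.extOneQuotientEquiv I (ModuleCat.of R R)).symm⟩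

/-- Let `R` be a commutative Noetherian domain with field of fractions `K`, and `I` a nonzero
ideal of `R`. Then `I⁻¹/R ≅ Ext¹_R(R/I, R)`, where `I⁻¹ = {q ∈ K : qI ⊆ R}` (formalized as the
submodule quotient `(1 : Submodule R K) / IK`, whose membership condition is exactly
`∀ y ∈ IK, q * y ∈ R`). -/
theorem stmt0 (R : Type) [CommRing R] [IsDomain R] [IsNoetherianRing R]
    (K : Type) [Field K] [Algebra R K] [IsFractionRing R K]
    (I : Ideal R) (hI : I ≠ ⊥)
    (Iinv : Submodule R K)
    (hIinv : Iinv = (1 : Submodule R K) / (Submodule.map (Algebra.linearMap R K) I)) :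
    Nonempty ((Iinv ⧸ ((1 : Submodule R K).comap Iinv.subtype)) ≃ₗ[R]
      ((Ext R (ModuleCat R) 1).obj (Opposite.op (ModuleCat.of R (R ⧸ I)))).obj
        (ModuleCat.of R R)) :=
  stmt0_general R K I hI Iinv hIinv
end

section
/- Let R ⊆ S be an extension of commutative Noetherian domains such that S is flat as an R-module, and let K = Frac(R) ⊆ L = Frac(S). For every nonzero ideal I of R, the reflexive closure of the extended ideal equals the extension of the reflexive closure: ((IS)⁻¹)⁻¹ = ((I⁻¹)⁻¹)·S, where ((I⁻¹)⁻¹)·S denotes the S-submodule of L generated by the image of (I⁻¹)⁻¹ ⊆ K. -/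
/-!
Write a finitely generated `J ≠ 0` in `K` as `J = R a₁ + ⋯ + R aₙ`. An element `x ∈ L` lies in
`(JS)⁻¹` iff `sᵢ = x aᵢ ∈ S` for all `i`; clearing denominators (`d aᵢ = bᵢ ∈ R`), the vector `s`
solves the `R`-linear system `bⱼ sᵢ = bᵢ sⱼ`. By flatness, the solutions in `S` of a linear system
over `R` are `S`-combinations of solutions in `R`, and a solution `r` in `R` gives
`r_{i₀} / a_{i₀} ∈ J⁻¹` whenever `a_{i₀} ≠ 0`. Dividing by `a_{i₀}` puts `x` in `J⁻¹S`, so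
`(JS)⁻¹ = J⁻¹S`. Apply this to `J = I`, and then to `J = I⁻¹`, which is finitely generated
since `R` is Noetherian.
-/

open Matrix Submodule Set TensorProduct

theorem Matrix.ker_mulVecLin_map_algebraMap {R S : Type*} [CommRing R] [CommRing S] [Algebra R S]
    [Module.Flat R S] {ι ι' : Type*} [Fintype ι] [Fintype ι'] (A : Matrix ι' ι R) :
    LinearMap.ker (A.map (algebraMap R S)).mulVecLin =
      span S ((algebraMap R S ∘ ·) '' LinearMap.ker A.mulVecLin) := by
  classical
  have base_change : ∀ y : S ⊗[R] (ι → R),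
      (A.map (algebraMap R S)).mulVecLin (piScalarRight R S S ι y) =
        piScalarRight R S S ι' (AlgebraTensorModule.lTensor S S A.mulVecLin y) := by
    intro y
    induction y using TensorProduct.induction_on with
    | zero => simp
    | tmul s r =>
      funext j
      simp [Matrix.mulVec, dotProduct, Algebra.smul_def, Finset.sum_mul, mul_assoc]
    | add x y hx hy => simp only [map_add, hx, hy]
  have hker : LinearMap.ker (A.map (algebraMap R S)).mulVecLin =
      (LinearMap.ker (AlgebraTensorModule.lTensor S S A.mulVecLin)).map
        (piScalarRight R S S ι).toLinearMap := by
    ext x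
    rw [mem_map_equiv, LinearMap.mem_ker, LinearMap.mem_ker,
      ← (piScalarRight R S S ι').map_eq_zero_iff, ← base_change, LinearEquiv.apply_symm_apply]
  rw [hker, Module.Flat.ker_lTensor_eq, ← LinearMap.range_comp]
  refine le_antisymm ?_ (span_le.mpr ?_)
  · rintro _ ⟨y, rfl⟩
    induction y using TensorProduct.induction_on with
    | zero => simp
    | tmul s r =>
      have hsr : piScalarRight R S S ι (s ⊗ₜ (r : ι → R)) = s • (algebraMap R S ∘ r) := by
        funext i
        simp [Algebra.smul_def, mul_comm]
      simp only [LinearMap.coe_comp, Function.comp_apply, AlgebraTensorModule.lTensor_tmul,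
        subtype_apply, LinearEquiv.coe_coe, hsr]
      exact smul_mem _ s (subset_span ⟨r, r.2, rfl⟩)
    | add a b ha hb => rw [map_add]; exact add_mem ha hb
  · rintro _ ⟨r, hr, rfl⟩
    refine ⟨(1 : S) ⊗ₜ ⟨r, hr⟩, ?_⟩
    funext i
    simp [Algebra.algebraMap_eq_smul_one]

section crossMatrix

variable {A : Type*} [CommRing A] {ι : Type*} [DecidableEq ι]

def crossMatrix (b : ι → A) : Matrix (ι × ι) ι A :=
  Matrix.of fun p => Pi.single p.1 (b p.2) - Pi.single p.2 (b p.1)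

theorem crossMatrix_map {B : Type*} [CommRing B] (f : A →+* B) (b : ι → A) :
    (crossMatrix b).map f = crossMatrix (f ∘ b) := by
  ext p k
  simp [crossMatrix, Pi.single_apply, apply_ite f]

variable [Fintype ι]

theorem crossMatrix_mulVec (b v : ι → A) (p : ι × ι) :
    (crossMatrix b *ᵥ v) p = b p.2 * v p.1 - b p.1 * v p.2 := by
  simp [crossMatrix, Matrix.mulVec, dotProduct, sub_mul, Pi.single_apply]

theorem mem_ker_crossMatrix_iff {b v : ι → A} :
    v ∈ LinearMap.ker (crossMatrix b).mulVecLin ↔ ∀ i j, b j * v i = b i * v j := by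
  simp [funext_iff, crossMatrix_mulVec, sub_eq_zero]

end crossMatrix

theorem Submodule.mem_one_div_span_iff {R A : Type*} [CommSemiring R] [CommSemiring A]
    [Algebra R A] {s : Set A} {x : A} :
    x ∈ 1 / span R s ↔ ∀ y ∈ s, x * y ∈ (1 : Submodule R A) := by
  rw [mem_div_iff_forall_mul_mem]
  exact ⟨fun h y hy => h y (subset_span hy), fun h =>
    span_le (p := (1 : Submodule R A).comap (LinearMap.mulLeft R x)) |>.mpr h⟩

section FractionField

variable {R K : Type*} [CommRing R] [Field K] [Algebra R K]

theorem div_mem_one_div_span_range {ι : Type*} {a : ι → K} {r : ι → R} {i₀ : ι}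
    (hi₀ : a i₀ ≠ 0) (hr : ∀ i, a i₀ * algebraMap R K (r i) = a i * algebraMap R K (r i₀)) :
    algebraMap R K (r i₀) / a i₀ ∈ 1 / span R (range a) := by
  rw [mem_one_div_span_iff]
  rintro _ ⟨i, rfl⟩
  refine mem_one.mpr ⟨r i, ?_⟩
  field_simp
  linear_combination hr i

variable [IsFractionRing R K]

theorem one_div_ne_bot_of_fg {J : Submodule R K} (hJ : J.FG) : 1 / J ≠ ⊥ := by
  obtain ⟨d, hd, hdJ⟩ := FractionalIdeal.isFractional_of_fg (S := nonZeroDivisors R) hJ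
  have hd_mem : algebraMap R K d ∈ 1 / J := by
    rw [mem_div_iff_forall_mul_mem]
    intro y hy
    obtain ⟨r, hr⟩ := hdJ y hy
    exact mem_one.mpr ⟨r, by rw [hr, Algebra.smul_def]⟩
  exact fun h => IsLocalization.map_units K ⟨d, hd⟩ |>.ne_zero (by simpa [h] using hd_mem)

theorem Submodule.FG.one_div [IsDomain R] [IsNoetherianRing R] {J : Submodule R K} (hJ : J.FG)
    (hJ0 : J ≠ ⊥) : (1 / J).FG := by
  have h := (1 : FractionalIdeal (nonZeroDivisors R) K).isFractional.div_of_nonzero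
    (FractionalIdeal.isFractional_of_fg hJ) hJ0
  rw [FractionalIdeal.coe_one] at h
  exact FractionalIdeal.fg_of_isNoetherianRing le_rfl ⟨1 / J, h⟩

end FractionField

section Extension

variable {R S K L : Type*} [CommRing R] [CommRing S] [Algebra R S]
  [Field K] [Algebra R K] [Field L] [Algebra S L]
  [Algebra K L] [Algebra R L] [IsScalarTower R S L] [IsScalarTower R K L]

variable (K) in
theorem Ideal.map_linearMap_map_algebraMap (I : Ideal R) :
    Submodule.map (Algebra.linearMap S L) (I.map (algebraMap R S)) =
      Submodule.span S (algebraMap K L '' Submodule.map (Algebra.linearMap R K) I) := by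
  rw [Ideal.map, Ideal.span, Submodule.map_span, Submodule.map_coe, image_image, image_image]
  simp only [Algebra.linearMap_apply, ← IsScalarTower.algebraMap_apply]

theorem span_algebraMap_image_span (s : Set K) :
    span S (algebraMap K L '' span R s) = span S (algebraMap K L '' s) := by
  rw [← span_span_of_tower R S (algebraMap K L '' s)]
  exact congrArg (span S ∘ SetLike.coe) (map_span (IsScalarTower.toAlgHom R K L).toLinearMap s)

theorem span_image_one_div_le_one_div_span (J : Submodule R K) :
    span S (algebraMap K L '' ↑(1 / J)) ≤ 1 / span S (algebraMap K L '' J) := by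
  refine span_le.mpr ?_
  rintro _ ⟨q, hq, rfl⟩
  rw [SetLike.mem_coe, mem_one_div_span_iff]
  rintro _ ⟨y, hy, rfl⟩
  obtain ⟨r, hr⟩ := mem_one.mp (mem_div_iff_forall_mul_mem.mp hq y hy)
  refine mem_one.mpr ⟨algebraMap R S r, ?_⟩
  rw [← map_mul, ← hr, ← IsScalarTower.algebraMap_apply, ← IsScalarTower.algebraMap_apply]

variable [IsFractionRing R K] [IsFractionRing S L] [Module.Flat R S]

theorem one_div_span_range_le {ι : Type*} [Fintype ι] {a : ι → K} {i₀ : ι} (hi₀ : a i₀ ≠ 0) :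
    1 / span S (range (algebraMap K L ∘ a)) ≤
      span S (algebraMap K L '' ↑(1 / span R (range a))) := by
  classical
  intro x hx
  rw [mem_one_div_span_iff] at hx
  choose s hs using fun i => mem_one.mp (hx _ ⟨i, rfl⟩)
  obtain ⟨d, hd⟩ := IsLocalization.exist_integer_multiples_of_finite (nonZeroDivisors R) a
  choose b hb using hd
  have hs_ker : s ∈ LinearMap.ker ((crossMatrix b).map (algebraMap R S)).mulVecLin := by
    rw [crossMatrix_map, mem_ker_crossMatrix_iff]
    intro i j
    apply IsFractionRing.injective S L
    simp only [map_mul, Function.comp_apply, hs, ← IsScalarTower.algebraMap_apply R S L,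
      IsScalarTower.algebraMap_apply R K L, hb, Algebra.smul_def]
    ring
  rw [Matrix.ker_mulVecLin_map_algebraMap] at hs_ker
  let θ : (ι → S) →ₗ[S] L :=
    (algebraMap K L (a i₀))⁻¹ • (Algebra.linearMap S L ∘ₗ LinearMap.proj i₀)
  have hθs : θ s = x := by
    simp [θ, hs, mul_comm x, inv_mul_cancel_left₀ ((map_ne_zero _).mpr hi₀)]
  suffices h : (span S ((algebraMap R S ∘ ·) '' LinearMap.ker (crossMatrix b).mulVecLin)).map θ ≤
      span S (algebraMap K L '' ↑(1 / span R (range a))) from h ⟨s, hs_ker, hθs⟩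
  rw [map_span, span_le]
  rintro _ ⟨_, ⟨r, hr, rfl⟩, rfl⟩
  have hr_cross : ∀ i, a i₀ * algebraMap R K (r i) = a i * algebraMap R K (r i₀) := by
    intro i
    have h := congrArg (algebraMap R K) (mem_ker_crossMatrix_iff.mp hr i i₀)
    simp only [map_mul, hb, Algebra.smul_def] at h
    exact (IsLocalization.map_units K d).mul_left_cancel (by linear_combination h)
  refine subset_span ⟨_, div_mem_one_div_span_range hi₀ hr_cross, ?_⟩
  simp [θ, div_eq_inv_mul, ← IsScalarTower.algebraMap_apply]

theorem one_div_span_algebraMap_image {J : Submodule R K} (hJ : J.FG) (hJ0 : J ≠ ⊥) :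
    1 / span S (algebraMap K L '' J) = span S (algebraMap K L '' ↑(1 / J)) := by
  obtain ⟨n, a, rfl⟩ := fg_iff_exists_fin_generating_family.mp hJ
  obtain ⟨i₀, hi₀⟩ : ∃ i, a i ≠ 0 := by
    by_contra! h
    exact hJ0 (span_eq_bot.mpr (by rintro _ ⟨i, rfl⟩; exact h i))
  refine le_antisymm ?_ (span_image_one_div_le_one_div_span _)
  rw [span_algebraMap_image_span, ← range_comp]
  exact one_div_span_range_le hi₀

end Extension

theorem stmt2_general (R S K L : Type)
    [CommRing R] [IsDomain R] [IsNoetherianRing R]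
    [CommRing S]
    [Algebra R S] [Module.Flat R S]
    [Field K] [Algebra R K] [IsFractionRing R K]
    [Field L] [Algebra S L] [IsFractionRing S L]
    [Algebra K L] [Algebra R L] [IsScalarTower R S L] [IsScalarTower R K L]
    (I : Ideal R) (hI : I ≠ ⊥) :
    1 / (1 / (Submodule.map (Algebra.linearMap S L) (I.map (algebraMap R S))))
      = Submodule.span S ((algebraMap K L) ''
          ((1 / (1 / (Submodule.map (Algebra.linearMap R K) I)) : Submodule R K) : Set K)) := by
  set J : Submodule R K := Submodule.map (Algebra.linearMap R K) I
  have hJ : J.FG := (IsNoetherian.noetherian I).map _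
  have hJ0 : J ≠ ⊥ := fun h => hI <|
    map_injective_of_injective (IsFractionRing.injective R K) (h.trans (Submodule.map_bot _).symm)
  rw [Ideal.map_linearMap_map_algebraMap K, one_div_span_algebraMap_image hJ hJ0,
    one_div_span_algebraMap_image (hJ.one_div hJ0) (one_div_ne_bot_of_fg hJ)]

/-- Let `R ⊆ S` be an extension of commutative Noetherian domains with `S` flat over `R`, and
`K = Frac(R) ⊆ L = Frac(S)`. For every nonzero ideal `I` of `R`, the reflexive closure of the
extended ideal equals the extension of the reflexive closure:
`((IS)⁻¹)⁻¹ = ((I⁻¹)⁻¹)·S` inside `L`, where for a submodule `J` of the fraction field the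
inverse `J⁻¹` is formalized as the submodule quotient `1 / J`. -/
theorem stmt2 (R S K L : Type)
    [CommRing R] [IsDomain R] [IsNoetherianRing R]
    [CommRing S] [IsDomain S] [IsNoetherianRing S]
    [Algebra R S] (hRS : Function.Injective (algebraMap R S)) [Module.Flat R S]
    [Field K] [Algebra R K] [IsFractionRing R K]
    [Field L] [Algebra S L] [IsFractionRing S L]
    [Algebra K L] [Algebra R L] [IsScalarTower R S L] [IsScalarTower R K L]
    (I : Ideal R) (hI : I ≠ ⊥) :
    1 / (1 / (Submodule.map (Algebra.linearMap S L) (I.map (algebraMap R S))))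
      = Submodule.span S ((algebraMap K L) ''
          ((1 / (1 / (Submodule.map (Algebra.linearMap R K) I)) : Submodule R K) : Set K)) :=
  stmt2_general R S K L I hI
end

section
/- Let R ⊆ S be an extension of commutative Noetherian domains such that S is flat as an R-module. If J is a reflexive ideal of S (i.e. J = (J⁻¹)⁻¹ computed in Frac(S)) and J ∩ R ≠ 0, then J ∩ R is a reflexive ideal of R (i.e. J ∩ R = ((J ∩ R)⁻¹)⁻¹ computed in Frac(R)). -/
/-!
If `a` is a nonzero-divisor in an ideal `I`, the inverse of `I` in the fraction field is
`a⁻¹ (aR : I)`, so `I` is reflexive iff `(aR : (aR : I)) ≤ I`. Pick `a ≠ 0` in `I = J ∩ R`.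
Since `I` is finitely generated and `S` is flat, `(aS : IS) = (aR : I) S`, so every
`r ∈ (aR : (aR : I))` satisfies `r (aS : J) ⊆ r (aS : IS) = r (aR : I) S ⊆ aS`, that is,
`r ∈ (aS : (aS : J)) = J`.
-/

open Finsupp nonZeroDivisors

section Flat

variable {R S : Type*} [CommRing R] [CommRing S] [Algebra R S] [Module.Flat R S]

theorem Module.Flat.algebraMap_mem_nonZeroDivisors {a : R} (ha : a ∈ R⁰) :
    algebraMap R S a ∈ S⁰ :=
  mem_nonZeroDivisors_iff_right.mpr fun x hx ↦
    isSMulRegular_of_nonZeroDivisors (M := S) ha <| by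
      simpa [Algebra.smul_def, mul_comm] using hx

theorem Module.Flat.mem_map_colon_range_of_mul_eq {n : ℕ} (g : Fin n → R) (a : R) {s : S}
    {t : Fin n → S} (h : ∀ i, algebraMap R S (g i) * s = algebraMap R S a * t i) :
    s ∈ ((Ideal.span {a}).colon (Set.range g)).map (algebraMap R S) := by
  -- By the equational criterion, the relations `g i • e₀ = a • e (i + 1)` satisfied by `(s, t)`
  -- come from `R^k`; the coordinates of the preimage of `e₀` then lie in `(aR : g)`.
  let x : (Fin (n + 1) →₀ R) →ₗ[R] S := linearCombination R (Fin.cons s t)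
  let f : (Fin n →₀ R) →ₗ[R] (Fin (n + 1) →₀ R) :=
    linearCombination R fun i ↦ single 0 (g i) - single i.succ a
  have hxf : x ∘ₗ f = 0 := by
    ext i
    simp [x, f, Algebra.smul_def, h]
  obtain ⟨k, A, y, hxy, hAf⟩ := exists_factorization_of_comp_eq_zero_of_free hxf
  have hA : ∀ j, A (single 0 1) j ∈ (Ideal.span {a}).colon (Set.range g) := by
    intro j
    refine Submodule.mem_colon.mpr ?_
    rintro _ ⟨i, rfl⟩
    have hAi : g i • A (single 0 1) = a • A (single i.succ 1) := by
      simpa [f, sub_eq_zero, ← map_smul, smul_single] using LinearMap.congr_fun hAf (single i 1)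
    exact Ideal.mem_span_singleton'.mpr
      ⟨A (single i.succ 1) j, by simpa [mul_comm] using (DFunLike.congr_fun hAi j).symm⟩
  have hs : s = y (A (single 0 1)) := by
    simpa [x] using LinearMap.congr_fun hxy (single 0 1)
  rw [hs, ← sum_single (A (single 0 1)), map_finsuppSum]
  refine Submodule.finsuppSum_mem _ _ _ _ fun j _ ↦ ?_
  rw [← smul_single_one, map_smul, Algebra.smul_def]
  exact Ideal.mul_mem_right _ _ (Ideal.mem_map_of_mem _ (hA j))

theorem Ideal.span_singleton_colon_map_le_map_colon_of_flat {I : Ideal R} (hI : I.FG) (a : R) :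
    (Ideal.span {algebraMap R S a}).colon (I.map (algebraMap R S) : Set S) ≤
      ((Ideal.span {a}).colon (I : Set R)).map (algebraMap R S) := by
  obtain ⟨n, g, rfl⟩ := Submodule.fg_iff_exists_fin_generating_family.mp hI
  intro s hs
  rw [Ideal.map_span, Ideal.colon_span] at hs
  rw [Ideal.colon_span]
  choose t ht using fun i ↦
    Ideal.mem_span_singleton'.mp (Submodule.mem_colon.mp hs _ ⟨g i, Set.mem_range_self i, rfl⟩)
  exact Module.Flat.mem_map_colon_range_of_mul_eq g a (t := t) fun i ↦ by
    rw [mul_comm, ← smul_eq_mul, ← ht i, mul_comm]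

end Flat

theorem Ideal.le_colon_colon {R : Type*} [CommRing R] (N I : Ideal R) :
    I ≤ N.colon (N.colon (I : Set R) : Set R) :=
  fun r hr ↦ Submodule.mem_colon.mpr fun c hc ↦ by
    rw [smul_eq_mul, mul_comm]
    exact Submodule.mem_colon.mp hc r hr

theorem Ideal.mul_mem_map_of_mem_colon {R S : Type*} [CommRing R] [CommRing S] (f : R →+* S)
    {N P : Ideal R} {r : R} (hr : r ∈ N.colon (P : Set R)) {t : S} (ht : t ∈ P.map f) :
    f r * t ∈ N.map f := by
  suffices P.map f ≤ (N.map f).colon {f r} by simpa [mul_comm] using this ht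
  refine Ideal.map_le_iff_le_comap.mpr fun p hp ↦ ?_
  simpa [← map_mul, mul_comm] using Ideal.mem_map_of_mem f (Submodule.mem_colon.mp hr p hp)

namespace IsFractionRing

variable {R K : Type*} [CommRing R] [Field K] [Algebra R K] [IsFractionRing R K]
  {I : Ideal R} {a : R}

theorem mem_one_div_map_iff (haI : a ∈ I) (ha : a ∈ R⁰) {x : K} :
    x ∈ 1 / Submodule.map (Algebra.linearMap R K) I ↔
      ∃ c ∈ (Ideal.span {a}).colon (I : Set R), algebraMap R K c = x * algebraMap R K a := by
  have ha' : algebraMap R K a ≠ 0 := (IsLocalization.map_units K ⟨a, ha⟩).ne_zero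
  simp only [Submodule.mem_div_iff_forall_mul_mem, Submodule.mem_map, Submodule.mem_one,
    Algebra.linearMap_apply, forall_exists_index, and_imp, forall_apply_eq_imp_iff₂,
    Submodule.mem_colon, smul_eq_mul, Ideal.mem_span_singleton']
  constructor
  · intro h
    obtain ⟨c, hc⟩ := h a haI
    refine ⟨c, fun b hb ↦ ?_, hc⟩
    obtain ⟨w, hw⟩ := h b hb
    refine ⟨w, IsFractionRing.injective R K ?_⟩
    simp only [map_mul, hw, hc]
    ring
  · rintro ⟨c, hc, hcx⟩ b hb
    obtain ⟨w, hw⟩ := hc b hb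
    refine ⟨w, mul_right_cancel₀ ha' ?_⟩
    rw [← map_mul, hw, map_mul, hcx]
    ring

theorem one_div_one_div_map_eq_map_colon_colon (haI : a ∈ I) (ha : a ∈ R⁰) :
    1 / (1 / Submodule.map (Algebra.linearMap R K) I) =
      Submodule.map (Algebra.linearMap R K)
        ((Ideal.span {a}).colon ((Ideal.span {a}).colon (I : Set R) : Set R)) := by
  have ha' : algebraMap R K a ≠ 0 := (IsLocalization.map_units K ⟨a, ha⟩).ne_zero
  ext y
  rw [Submodule.mem_div_iff_forall_mul_mem, Submodule.mem_map]
  simp only [Algebra.linearMap_apply, Submodule.mem_colon, smul_eq_mul,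
    Ideal.mem_span_singleton']
  constructor
  · intro h
    have one_mem : (1 : K) ∈ 1 / Submodule.map (Algebra.linearMap R K) I :=
      (mem_one_div_map_iff haI ha).mpr ⟨a, Submodule.mem_colon.mpr fun b _ ↦
        Ideal.mem_span_singleton'.mpr ⟨b, mul_comm _ _⟩, (one_mul _).symm⟩
    obtain ⟨r, rfl⟩ := Submodule.mem_one.mp (mul_one y ▸ h 1 one_mem)
    refine ⟨r, fun c hc ↦ ?_, rfl⟩
    have hca : algebraMap R K c / algebraMap R K a ∈ 1 / Submodule.map (Algebra.linearMap R K) I :=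
      (mem_one_div_map_iff haI ha).mpr ⟨c, hc, by field_simp⟩
    obtain ⟨w, hw⟩ := Submodule.mem_one.mp (h _ hca)
    refine ⟨w, IsFractionRing.injective R K ?_⟩
    rw [map_mul, map_mul, hw]
    field_simp
  · rintro ⟨r, hr, rfl⟩ x hx
    obtain ⟨c, hc, hcx⟩ := (mem_one_div_map_iff haI ha).mp hx
    obtain ⟨w, hw⟩ := hr c hc
    refine Submodule.mem_one.mpr ⟨w, mul_right_cancel₀ ha' ?_⟩
    rw [← map_mul, hw, map_mul, hcx]
    ring

theorem map_eq_one_div_one_div_iff_colon_colon_le (haI : a ∈ I) (ha : a ∈ R⁰) :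
    Submodule.map (Algebra.linearMap R K) I = 1 / (1 / Submodule.map (Algebra.linearMap R K) I) ↔
      (Ideal.span {a}).colon ((Ideal.span {a}).colon (I : Set R) : Set R) ≤ I := by
  rw [one_div_one_div_map_eq_map_colon_colon haI ha,
    (Submodule.map_injective_of_injective (IsFractionRing.injective R K)).eq_iff]
  exact ⟨fun h ↦ h.ge, fun h ↦ le_antisymm (Ideal.le_colon_colon _ _) h⟩

end IsFractionRing

theorem stmt3_general (R S K L : Type)
    [CommRing R] [IsDomain R] [IsNoetherianRing R]
    [CommRing S]
    [Algebra R S] [Module.Flat R S]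
    [Field K] [Algebra R K] [IsFractionRing R K]
    [Field L] [Algebra S L] [IsFractionRing S L]
    (J : Ideal S)
    (hJrefl : Submodule.map (Algebra.linearMap S L) J
      = 1 / (1 / (Submodule.map (Algebra.linearMap S L) J)))
    (hJR : J.comap (algebraMap R S) ≠ ⊥) :
    Submodule.map (Algebra.linearMap R K) (J.comap (algebraMap R S))
      = 1 / (1 / (Submodule.map (Algebra.linearMap R K) (J.comap (algebraMap R S)))) := by
  obtain ⟨a, haI, ha0⟩ := (Submodule.ne_bot_iff _).mp hJR
  have ha : a ∈ R⁰ := mem_nonZeroDivisors_of_ne_zero ha0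
  have hJ := (IsFractionRing.map_eq_one_div_one_div_iff_colon_colon_le (I := J) haI
    (Module.Flat.algebraMap_mem_nonZeroDivisors ha)).mp hJrefl
  refine (IsFractionRing.map_eq_one_div_one_div_iff_colon_colon_le haI ha).mpr fun r hr ↦ hJ ?_
  refine Submodule.mem_colon.mpr fun t ht ↦ ?_
  have ht' := Ideal.span_singleton_colon_map_le_map_colon_of_flat (IsNoetherian.noetherian _) a
    (Submodule.colon_mono le_rfl Ideal.map_comap_le ht)
  simpa [Ideal.map_span] using Ideal.mul_mem_map_of_mem_colon _ hr ht'

/-- Let `R ⊆ S` be an extension of commutative Noetherian domains with `S` flat over `R`,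
`K = Frac(R)` and `L = Frac(S)`. If `J` is a reflexive ideal of `S` (i.e. `J = (J⁻¹)⁻¹` computed
in `L`, where the inverse of a submodule `N` of the fraction field is the submodule quotient
`1 / N`) and `J ∩ R ≠ 0`, then `J ∩ R` is a reflexive ideal of `R`. -/
theorem stmt3 (R S K L : Type)
    [CommRing R] [IsDomain R] [IsNoetherianRing R]
    [CommRing S] [IsDomain S] [IsNoetherianRing S]
    [Algebra R S] (hRS : Function.Injective (algebraMap R S)) [Module.Flat R S]
    [Field K] [Algebra R K] [IsFractionRing R K]
    [Field L] [Algebra S L] [IsFractionRing S L]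
    [Algebra K L] [Algebra R L] [IsScalarTower R S L] [IsScalarTower R K L]
    (J : Ideal S)
    (hJrefl : Submodule.map (Algebra.linearMap S L) J
      = 1 / (1 / (Submodule.map (Algebra.linearMap S L) J)))
    (hJR : J.comap (algebraMap R S) ≠ ⊥) :
    Submodule.map (Algebra.linearMap R K) (J.comap (algebraMap R S))
      = 1 / (1 / (Submodule.map (Algebra.linearMap R K) (J.comap (algebraMap R S)))) :=
  stmt3_general R S K L J hJrefl hJR
end

section
/- Let R be a commutative Noetherian domain and I a nonzero proper ideal of R that is reflexive, i.e. I = (I⁻¹)⁻¹ computed in K = Frac(R). If there is a nonzero element x ∈ I such that R/xR is a domain, then I = xR. -/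
/-- Let `R` be a commutative Noetherian domain with field of fractions `K` and `I` a nonzero
proper ideal of `R` that is reflexive, i.e. `I = (I⁻¹)⁻¹` computed in `K` (the inverse of a
submodule `N` of `K` being the submodule quotient `1 / N`). If there is a nonzero `x ∈ I` such
that `R/xR` is a domain, then `I = xR`. -/
theorem stmt4 (R : Type) [CommRing R] [IsDomain R] [IsNoetherianRing R]
    (K : Type) [Field K] [Algebra R K] [IsFractionRing R K]
    (I : Ideal R) (hI0 : I ≠ ⊥) (hItop : I ≠ ⊤)
    (hrefl : Submodule.map (Algebra.linearMap R K) I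
      = 1 / (1 / (Submodule.map (Algebra.linearMap R K) I)))
    (x : R) (hx : x ≠ 0) (hxI : x ∈ I)
    (hdom : IsDomain (R ⧸ Ideal.span ({x} : Set R))) :
    I = Ideal.span ({x} : Set R) := by
  have hp : (Ideal.span ({x} : Set R)).IsPrime :=
    (Ideal.Quotient.isDomain_iff_prime _).mp hdom
  have hsub : Ideal.span ({x} : Set R) ≤ I := by
    rwa [Ideal.span_le, Set.singleton_subset_iff]
  by_contra hne
  obtain ⟨a, haI, hax⟩ : ∃ a ∈ I, a ∉ Ideal.span ({x} : Set R) := by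
    by_contra h; push_neg at h; exact hne (le_antisymm h hsub)
  set M := Submodule.map (Algebra.linearMap R K) I with hM
  have hinj := IsFractionRing.injective R K
  have hxK : algebraMap R K x ≠ 0 := fun h => hx (hinj (by simpa using h))
  have hM1le : M ≤ 1 := by
    rintro q ⟨i, _, rfl⟩
    exact Submodule.mem_one.mpr ⟨i, rfl⟩
  have hdivle : (1 / M : Submodule R K) ≤ 1 := by
    intro q hq
    rw [Submodule.mem_div_iff_forall_mul_mem] at hq
    obtain ⟨r, hr⟩ := Submodule.mem_one.mp (hq _ ⟨x, hxI, rfl⟩)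
    obtain ⟨s, hs⟩ := Submodule.mem_one.mp (hq _ ⟨a, haI, rfl⟩)
    have key : algebraMap R K (r * a) = algebraMap R K (s * x) := by
      rw [map_mul, map_mul, hr, hs]
      simp only [Algebra.linearMap_apply]
      ring
    have hra : r * a = s * x := hinj key
    have hrmem : r ∈ Ideal.span ({x} : Set R) := by
      have h1 : r * a ∈ Ideal.span ({x} : Set R) := by
        rw [hra]; exact Ideal.mul_mem_left _ _ (Ideal.mem_span_singleton_self x)
      rcases hp.mem_or_mem h1 with h | h
      · exact h
      · exact absurd h hax
    obtain ⟨t, ht⟩ := Ideal.mem_span_singleton'.mp hrmem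
    refine Submodule.mem_one.mpr ⟨t, ?_⟩
    have h2 : algebraMap R K t * algebraMap R K x = q * algebraMap R K x := by
      rw [← map_mul, ht, hr]; simp [Algebra.linearMap_apply]
    exact mul_right_cancel₀ hxK h2
  have hdivge : (1 : Submodule R K) ≤ 1 / M := by
    rw [Submodule.le_div_iff_mul_le, one_mul]; exact hM1le
  have hdiv : (1 / M : Submodule R K) = 1 := le_antisymm hdivle hdivge
  have h11 : (1 / (1 : Submodule R K)) = 1 := by
    apply le_antisymm
    · intro q hq
      rw [Submodule.mem_div_iff_forall_mul_mem] at hq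
      simpa using hq 1 (Submodule.mem_one.mpr ⟨1, map_one _⟩)
    · rw [Submodule.le_div_iff_mul_le, one_mul]
  have hMeq : M = 1 := by rw [hrefl, hdiv, h11]
  have hone : (1 : R) ∈ I := by
    have : (1 : K) ∈ M := hMeq ▸ Submodule.mem_one.mpr ⟨1, map_one _⟩
    obtain ⟨i, hi, hieq⟩ := this
    have : i = 1 := hinj (by simpa using hieq)
    rwa [this] at hi
  exact hItop (Ideal.eq_top_iff_one I |>.mpr hone)
end

section
/- Let 𝒜 be a skeletally small abelian category and let A₁, A₂ be objects of 𝒜 with [A₁] = [A₂] in the Grothendieck group K₀(𝒜). Then there exist objects C, D, K, L of 𝒜 and short exact sequences 0 → C → K → D → 0 and 0 → C → L → D → 0 in 𝒜 such that A₁ ⊕ K ≅ A₂ ⊕ L. -/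
open CategoryTheory CategoryTheory.Limits

universe v u

/-- The subgroup of relations defining the Grothendieck group `K₀` of an abelian category:
for each short exact sequence `0 → X₁ → X₂ → X₃ → 0` we impose `[X₂] = [X₁] + [X₃]`. -/
def K0Relations (𝒜 : Type u) [Category.{v} 𝒜] [Abelian 𝒜] :
    AddSubgroup (FreeAbelianGroup 𝒜) :=
  AddSubgroup.closure
    {x | ∃ S : ShortComplex 𝒜, S.ShortExact ∧
      x = FreeAbelianGroup.of S.X₂ - FreeAbelianGroup.of S.X₁ - FreeAbelianGroup.of S.X₃}

/-- The Grothendieck group `K₀(𝒜)` of a (skeletally small) abelian category `𝒜`: the abelian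
group with one generator for each object of `𝒜` and one relation `[A₂] = [A₁] + [A₃]` for each
short exact sequence `0 → A₁ → A₂ → A₃ → 0`. -/
def K0 (𝒜 : Type u) [Category.{v} 𝒜] [Abelian 𝒜] : Type u :=
  FreeAbelianGroup 𝒜 ⧸ K0Relations 𝒜

/-- The class `[A] ∈ K₀(𝒜)` of an object `A` of `𝒜`. -/
def K0.mk {𝒜 : Type u} [Category.{v} 𝒜] [Abelian 𝒜] (A : 𝒜) : K0 𝒜 :=
  QuotientAddGroup.mk (FreeAbelianGroup.of A)

/-!
Every element of the relation subgroup of `K₀(𝒜)` can be written as `Σ [P] - Σ [Q]` for lists of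
objects `P`, `Q` whose biproducts `⊕P`, `⊕Q` are extensions of the same object by the same object:
the relation of a short exact sequence `0 → X₁ → X₂ → X₃ → 0` is realised by that sequence and the
split one `0 → X₁ → X₁ ⊞ X₃ → X₃ → 0`, sums by biproducts of sequences, negatives by swapping.
If `[A₂] - [A₁] = Σ [P] - Σ [Q]` in the free abelian group, then `A₁ :: P` and `A₂ :: Q` are
permutations of each other, hence `A₁ ⊞ ⊕P ≅ A₂ ⊞ ⊕Q`.
-/

theorem FreeAbelianGroup.toFinsupp_sum_map_of {α : Type*} [DecidableEq α] (l : List α) (a : α) :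
    toFinsupp (l.map of).sum a = l.count a := by
  induction l with
  | nil => simp
  | cons x l ih =>
    simp only [List.map_cons, List.sum_cons, map_add, Finsupp.add_apply, ih, toFinsupp_of,
      List.count_cons, Finsupp.single_apply, beq_iff_eq]
    split_ifs <;> simp_all [add_comm]

theorem List.perm_of_sum_map_of_eq {α : Type*} {l₁ l₂ : List α}
    (h : (l₁.map FreeAbelianGroup.of).sum = (l₂.map FreeAbelianGroup.of).sum) : l₁.Perm l₂ := by
  classical
  refine List.perm_iff_count.2 fun a => ?_
  simpa [FreeAbelianGroup.toFinsupp_sum_map_of] using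
    congr($(congrArg FreeAbelianGroup.toFinsupp h) a)

namespace CategoryTheory

variable {C : Type*} [Category C]

namespace ShortComplex

variable [Preadditive C] [HasBinaryBiproducts C]

noncomputable abbrev biprodMap (S T : ShortComplex C) : ShortComplex C :=
  ShortComplex.mk (biprod.map S.f T.f) (biprod.map S.g T.g) (by ext <;> simp)

lemma Exact.biprodMap [CategoryWithHomology C] {S T : ShortComplex C} (hS : S.Exact)
    (hT : T.Exact) : (S.biprodMap T).Exact := by
  let inl : S ⟶ S.biprodMap T := ⟨biprod.inl, biprod.inl, biprod.inl, by simp, by simp⟩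
  let inr : T ⟶ S.biprodMap T := ⟨biprod.inr, biprod.inr, biprod.inr, by simp, by simp⟩
  let fst : S.biprodMap T ⟶ S := ⟨biprod.fst, biprod.fst, biprod.fst, by simp, by simp⟩
  let snd : S.biprodMap T ⟶ T := ⟨biprod.snd, biprod.snd, biprod.snd, by simp, by simp⟩
  have total : 𝟙 (S.biprodMap T) = fst ≫ inl + snd ≫ inr := by
    ext <;> simp [inl, inr, fst, snd]
  -- the identity of the biproduct complex factors through `S` and `T`, whose homology vanishes
  rw [exact_iff_isZero_homology] at hS hT ⊢
  rw [IsZero.iff_id_eq_zero, ← homologyMap_id, total, homologyMap_add, homologyMap_comp,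
    homologyMap_comp, hS.eq_of_tgt (homologyMap fst) 0, hT.eq_of_tgt (homologyMap snd) 0]
  simp

lemma ShortExact.biprodMap [CategoryWithHomology C] {S T : ShortComplex C}
    (hS : S.ShortExact) (hT : T.ShortExact) : (S.biprodMap T).ShortExact :=
  have := hS.mono_f; have := hT.mono_f; have := hS.epi_g; have := hT.epi_g
  { exact := hS.exact.biprodMap hT.exact
    mono_f := inferInstance
    epi_g := inferInstance }

end ShortComplex

section ListBiprod

variable [HasZeroMorphisms C] [HasZeroObject C] [HasBinaryBiproducts C]

open ZeroObject

noncomputable def listBiprod : List C → C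
  | [] => 0
  | X :: l => X ⊞ listBiprod l

noncomputable def listBiprodSingletonIso (X : C) : listBiprod [X] ≅ X :=
  (isoBiprodZero (isZero_zero C)).symm

noncomputable def listBiprodAppendIso : (l m : List C) →
    listBiprod (l ++ m) ≅ listBiprod l ⊞ listBiprod m
  | [], _ => isoZeroBiprod (isZero_zero C)
  | X :: l, m =>
    biprod.mapIso (Iso.refl X) (listBiprodAppendIso l m) ≪≫ (biprod.associator _ _ _).symm

theorem nonempty_listBiprod_iso_of_perm {l₁ l₂ : List C} (h : l₁.Perm l₂) :
    Nonempty (listBiprod l₁ ≅ listBiprod l₂) := by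
  induction h with
  | nil => exact ⟨Iso.refl _⟩
  | cons X _ ih => exact ⟨biprod.mapIso (Iso.refl X) ih.some⟩
  | swap =>
    exact ⟨(biprod.associator _ _ _).symm ≪≫ biprod.mapIso (biprod.braiding _ _) (Iso.refl _) ≪≫
      biprod.associator _ _ _⟩
  | trans _ _ ih₁ ih₂ => exact ⟨ih₁.some ≪≫ ih₂.some⟩

theorem nonempty_listBiprod_iso_of_sum_map_of_eq {l₁ l₂ : List C}
    (h : (l₁.map FreeAbelianGroup.of).sum = (l₂.map FreeAbelianGroup.of).sum) :
    Nonempty (listBiprod l₁ ≅ listBiprod l₂) :=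
  nonempty_listBiprod_iso_of_perm (List.perm_of_sum_map_of_eq h)

end ListBiprod

def ExtensionsOfSameEnds [HasZeroMorphisms C] (K L : C) : Prop :=
  ∃ (A B : C) (f : A ⟶ K) (g : K ⟶ B) (f' : A ⟶ L) (g' : L ⟶ B) (w : f ≫ g = 0)
    (w' : f' ≫ g' = 0),
    (ShortComplex.mk f g w).ShortExact ∧ (ShortComplex.mk f' g' w').ShortExact

namespace ExtensionsOfSameEnds

lemma symm [HasZeroMorphisms C] {K L : C} (h : ExtensionsOfSameEnds K L) :
    ExtensionsOfSameEnds L K := by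
  obtain ⟨A, B, f, g, f', g', w, w', hS, hS'⟩ := h
  exact ⟨A, B, f', g', f, g, w', w, hS', hS⟩

lemma of_iso [HasZeroMorphisms C] {K L K' L' : C} (h : ExtensionsOfSameEnds K L) (e : K ≅ K')
    (e' : L ≅ L') : ExtensionsOfSameEnds K' L' := by
  obtain ⟨A, B, f, g, f', g', w, w', hS, hS'⟩ := h
  refine ⟨A, B, f ≫ e.hom, e.inv ≫ g, f' ≫ e'.hom, e'.inv ≫ g', by simp [w], by simp [w'],
    ShortComplex.shortExact_of_iso ?_ hS, ShortComplex.shortExact_of_iso ?_ hS'⟩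
  · exact ShortComplex.isoMk (Iso.refl _) e (Iso.refl _)
  · exact ShortComplex.isoMk (Iso.refl _) e' (Iso.refl _)

lemma refl [Preadditive C] [HasZeroObject C] (K : C) : ExtensionsOfSameEnds K K := by
  open ZeroObject in
  have hS : (ShortComplex.mk (𝟙 K) (0 : K ⟶ 0) (by simp)).ShortExact :=
    { exact := by rw [ShortComplex.exact_iff_epi _ rfl]; infer_instance
      epi_g := epi_of_target_iso_zero _ (Iso.refl _) }
  exact ⟨K, 0, _, _, _, _, _, _, hS, hS⟩

lemma biprod [Preadditive C] [HasBinaryBiproducts C] [CategoryWithHomology C] {K L K' L' : C}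
    (h : ExtensionsOfSameEnds K L) (h' : ExtensionsOfSameEnds K' L') :
    ExtensionsOfSameEnds (K ⊞ K') (L ⊞ L') := by
  obtain ⟨_, _, _, _, _, _, _, _, hS, hT⟩ := h
  obtain ⟨_, _, _, _, _, _, _, _, hS₂, hT₂⟩ := h'
  exact ⟨_, _, _, _, _, _, _, _, hS.biprodMap hS₂, hT.biprodMap hT₂⟩

lemma of_shortExact [Preadditive C] [HasZeroObject C] [HasBinaryBiproducts C]
    {S : ShortComplex C} (hS : S.ShortExact) : ExtensionsOfSameEnds S.X₂ (S.X₁ ⊞ S.X₃) :=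
  ⟨S.X₁, S.X₃, S.f, S.g, _, _, S.zero, _, hS,
    (ShortComplex.Splitting.ofHasBinaryBiproduct S.X₁ S.X₃).shortExact⟩

end ExtensionsOfSameEnds

end CategoryTheory

open CategoryTheory FreeAbelianGroup

theorem exists_extensionsOfSameEnds_of_mem_K0Relations {𝒜 : Type u} [Category.{v} 𝒜] [Abelian 𝒜]
    {x : FreeAbelianGroup 𝒜} (hx : x ∈ K0Relations 𝒜) :
    ∃ p q : List 𝒜, x = (p.map of).sum - (q.map of).sum ∧
      ExtensionsOfSameEnds (listBiprod p) (listBiprod q) := by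
  induction hx using AddSubgroup.closure_induction with
  | mem x hx =>
    obtain ⟨S, hS, rfl⟩ := hx
    refine ⟨[S.X₂], [S.X₁, S.X₃], by
      simp only [List.map_cons, List.map_nil, List.sum_cons, List.sum_nil, add_zero]; abel, ?_⟩
    exact (ExtensionsOfSameEnds.of_shortExact hS).of_iso (listBiprodSingletonIso _).symm
      (biprod.mapIso (Iso.refl _) (listBiprodSingletonIso _)).symm
  | zero => exact ⟨[], [], by simp, .refl _⟩
  | add x y _ _ hx hy =>
    obtain ⟨p, q, rfl, h⟩ := hx
    obtain ⟨p', q', rfl, h'⟩ := hy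
    refine ⟨p ++ p', q ++ q', by
      simp only [List.map_append, List.sum_append]; abel, ?_⟩
    exact (h.biprod h').of_iso (listBiprodAppendIso p p').symm (listBiprodAppendIso q q').symm
  | neg x _ hx =>
    obtain ⟨p, q, rfl, h⟩ := hx
    exact ⟨q, p, by abel, h.symm⟩

/-- Let `𝒜` be a (skeletally small) abelian category and `A₁, A₂` objects with `[A₁] = [A₂]`
in `K₀(𝒜)`. Then there are objects `C, D, K, L` and short exact sequences
`0 → C → K → D → 0` and `0 → C → L → D → 0` such that `A₁ ⊕ K ≅ A₂ ⊕ L`. -/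
theorem stmt5 (𝒜 : Type u) [Category.{v} 𝒜] [Abelian 𝒜] (A₁ A₂ : 𝒜)
    (h : K0.mk A₁ = K0.mk A₂) :
    ∃ (C D K L : 𝒜) (f : C ⟶ K) (g : K ⟶ D) (f' : C ⟶ L) (g' : L ⟶ D)
      (w : f ≫ g = 0) (w' : f' ≫ g' = 0),
      (ShortComplex.mk f g w).ShortExact ∧ (ShortComplex.mk f' g' w').ShortExact ∧
      Nonempty ((A₁ ⊞ K) ≅ (A₂ ⊞ L)) := by
  obtain ⟨p, q, hpq, C, D, f, g, f', g', w, w', hS, hS'⟩ :=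
    exists_extensionsOfSameEnds_of_mem_K0Relations (QuotientAddGroup.eq.mp h)
  refine ⟨C, D, _, _, f, g, f', g', w, w', hS, hS',
    nonempty_listBiprod_iso_of_sum_map_of_eq (l₁ := A₁ :: p) (l₂ := A₂ :: q) ?_⟩
  simp only [List.map_cons, List.sum_cons]
  linear_combination (norm := abel) -hpq
end

section
/- Let D be a division ring, V a finite-dimensional left D-vector space, R a commutative ring, and suppose V carries an R-module structure such that every r ∈ R acts as a D-linear endomorphism of V. Let S ⊆ R be a multiplicative subset and let T = {v ∈ V : ∃ s ∈ S, s • v = 0} be the S-torsion submodule. Then the canonical localization map V → S⁻¹V is surjective and its kernel equals T; in particular S⁻¹V is isomorphic as an R-module to V/T. -/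
/-!
Each `r ∈ R` acts on `V` by a `D`-linear endomorphism, and the ranges of its powers form a
descending chain of `D`-subspaces, which stabilises since `V` is finite-dimensional. Hence for
every `x` there are `n` and `y` with `r ^ (n + 1) • y = r ^ n • x`, which says `x / r = y / 1`
in `S⁻¹V`: the localization map is onto. Its kernel is the `S`-torsion by the definition of
`S⁻¹V`, and the isomorphism `S⁻¹V ≃ V / T` is the first isomorphism theorem.
-/

theorem IsArtinian.exists_pow_succ_smul_eq_pow_smul {D V R : Type*} [Ring D] [AddCommMonoid V]
    [Module D V] [IsArtinian D V] [Monoid R] [DistribMulAction R V] [SMulCommClass R D V]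
    (r : R) (x : V) : ∃ (n : ℕ) (y : V), r ^ (n + 1) • y = r ^ n • x := by
  set f : Module.End D V := DistribMulAction.toModuleEnd D V r
  have hpow (k : ℕ) (v : V) : (f ^ k) v = r ^ k • v := by
    rw [← map_pow, DistribMulAction.toModuleEnd_apply, DistribSMul.toLinearMap_apply]
  obtain ⟨n, hn⟩ := IsArtinian.monotone_stabilizes f.iterateRange
  have hmem : (f ^ n) x ∈ LinearMap.range (f ^ (n + 1)) := by
    rw [← show LinearMap.range (f ^ n) = LinearMap.range (f ^ (n + 1)) from hn (n + 1) n.le_succ]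
    exact LinearMap.mem_range_self _ x
  obtain ⟨y, hy⟩ := hmem
  exact ⟨n, y, by rw [← hpow, ← hpow, hy]⟩

namespace LocalizedModule

variable {R M : Type*} [CommSemiring R] [AddCommMonoid M] [Module R M] {S : Submonoid R}

theorem mkLinearMap_surjective_of_exists_pow_succ_smul
    (h : ∀ s ∈ S, ∀ x : M, ∃ (n : ℕ) (y : M), s ^ (n + 1) • y = s ^ n • x) :
    Function.Surjective (mkLinearMap S M) := by
  intro z
  induction z using induction_on with
  | h x s =>
    obtain ⟨n, y, hy⟩ := h s s.2 x
    refine ⟨y, ?_⟩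
    rw [mkLinearMap_apply, mk_eq]
    refine ⟨⟨s ^ n, pow_mem s.2 n⟩, ?_⟩
    change (s : R) ^ n • (s : R) • y = (s : R) ^ n • (1 : S) • x
    rw [one_smul, ← mul_smul, ← pow_succ, hy]

end LocalizedModule

theorem LocalizedModule.ker_mkLinearMap_eq_torsion' {R M : Type*} [CommRing R] [AddCommMonoid M]
    [Module R M] (S : Submonoid R) :
    LinearMap.ker (mkLinearMap S M) = Submodule.torsion' R M S := by
  ext x
  rw [mem_ker_mkLinearMap_iff, Submodule.mem_torsion'_iff]
  exact ⟨fun ⟨r, hr, hx⟩ ↦ ⟨⟨r, hr⟩, hx⟩, fun ⟨s, hx⟩ ↦ ⟨s, s.2, hx⟩⟩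

/-- Let `D` be a division ring, `V` a finite-dimensional left `D`-vector space, `R` a commutative
ring acting on `V` through `D`-linear endomorphisms, `S ⊆ R` a multiplicative subset and
`T = {v ∈ V : ∃ s ∈ S, s • v = 0}` the `S`-torsion submodule. Then the canonical map
`V → S⁻¹V` is surjective, its kernel is exactly `T`, and consequently `S⁻¹V ≅ V/T` as
`R`-modules. -/
theorem stmt6 (D : Type) [DivisionRing D] (V : Type) [AddCommGroup V] [Module D V]
    [FiniteDimensional D V]
    (R : Type) [CommRing R] [Module R V] [SMulCommClass R D V]
    (S : Submonoid R) :
    Function.Surjective (LocalizedModule.mkLinearMap S V) ∧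
    (∀ v : V, LocalizedModule.mkLinearMap S V v = 0 ↔ ∃ s ∈ S, s • v = 0) ∧
    Nonempty ((LocalizedModule S V) ≃ₗ[R] (V ⧸ Submodule.torsion' R V S)) := by
  have hsurj : Function.Surjective (LocalizedModule.mkLinearMap S V) :=
    LocalizedModule.mkLinearMap_surjective_of_exists_pow_succ_smul fun s _ x ↦
      IsArtinian.exists_pow_succ_smul_eq_pow_smul (D := D) s x
  refine ⟨hsurj, fun v ↦ LocalizedModule.mem_ker_mkLinearMap_iff, ?_⟩
  rw [← LocalizedModule.ker_mkLinearMap_eq_torsion']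
  exact ⟨(LinearMap.quotKerEquivOfSurjective _ hsurj).symm⟩
end

section
/- Let D be a division ring and I a two-sided ideal of the polynomial ring D[z]. Suppose f ∈ I is a nonzero monic polynomial whose degree is minimal among the degrees of nonzero elements of I. Then every coefficient of f lies in the center of D. -/
/-- Let `D` be a division ring and `I` a two-sided ideal of the polynomial ring `D[z]`. If
`f ∈ I` is a nonzero monic polynomial whose degree is minimal among the degrees of nonzero
elements of `I`, then every coefficient of `f` lies in the center of `D`. -/
theorem stmt9 (D : Type) [DivisionRing D] (I : TwoSidedIdeal (Polynomial D))
    (f : Polynomial D) (hfI : f ∈ I) (hf0 : f ≠ 0) (hmonic : f.Monic)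
    (hmin : ∀ g ∈ I, g ≠ 0 → f.degree ≤ g.degree) :
    ∀ n : ℕ, f.coeff n ∈ Subring.center D := by
  intro n
  rw [Subring.mem_center_iff]
  intro u
  -- key: C u * f = f * C u
  have key : Polynomial.C u * f = f * Polynomial.C u := by
    by_cases hu : u = 0
    · simp [hu]
    set g := Polynomial.C u * f - f * Polynomial.C u with hg
    have hgI : g ∈ I := I.sub_mem (I.mul_mem_left _ _ hfI) (I.mul_mem_right _ _ hfI)
    have hCu : (Polynomial.C u : Polynomial D) ≠ 0 := by simpa using hu
    have hne : Polynomial.C u * f ≠ 0 := mul_ne_zero hCu hf0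
    have hdeg : (Polynomial.C u * f).degree = (f * Polynomial.C u).degree := by
      rw [Polynomial.degree_mul, Polynomial.degree_mul, add_comm]
    have hlead : (Polynomial.C u * f).leadingCoeff = (f * Polynomial.C u).leadingCoeff := by
      rw [Polynomial.leadingCoeff_mul, Polynomial.leadingCoeff_mul,
        Polynomial.leadingCoeff_C, hmonic.leadingCoeff, mul_one, one_mul]
    have hlt : g.degree < f.degree := by
      have := Polynomial.degree_sub_lt hdeg hne hlead
      calc g.degree < (Polynomial.C u * f).degree := this
        _ = (Polynomial.C u).degree + f.degree := Polynomial.degree_mul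
        _ = f.degree := by rw [Polynomial.degree_C hu, zero_add]
    have hg0 : g = 0 := by
      by_contra h
      exact absurd (hmin g hgI h) (not_le.mpr hlt)
    have := sub_eq_zero.mp hg0
    exact this
  have h2 := congrArg (fun p => Polynomial.coeff p n) key
  simp only [Polynomial.coeff_C_mul, Polynomial.coeff_mul_C] at h2
  exact h2
end
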